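/- arXiv:1407.7289 — 2 statements merged into one kernel-verified Lean document; each statement's English description precedes it below -/
import Mathlib

section
/- Assume the Hardy–Littlewood lower bound: there exists N₀ such that for every even integer N ≥ N₀, the number of ordered pairs (p₁,p₂) of primes with 3 ≤ p₁,p₂ ≤ N and p₁+p₂ = N is at least (1/2)·(N/φ(N))·∏_{p prime, p∤N}(1 - 1/(p-1)²)·N/(log N)². Let d = ∏_{p odd prime}(1 - 1/(p-1)²). Then for every positive integer n and every sufficiently large odd integer q, the number of ordered pairs (p₁,p₂) of primes with 3 ≤ p₁,p₂ ≤ 2nq and p₁+p₂ = 2nq is at least (q/φ(q))·(2nq·d)/(log 2nq)². -/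
/-!
Put `N = 2nq`. As `q` is odd, `φ N ≤ n φ(2q) = n φ q`, so `q / φ q ≤ N / (2 φ N)`. As `N` is even,
every Euler factor of `singularProd N` dominates the corresponding factor of `d`, and all factors
lie in `[0, 1]`, so `d ≤ singularProd N`. The Hardy–Littlewood bound at `N` then gives the claim
for every odd `q ≥ N₀`.
-/

/-- The number of ordered pairs `(p₁, p₂)` of primes with `3 ≤ p₁, p₂ ≤ N` and `p₁ + p₂ = N`. -/
def goldbachCount (N : ℕ) : ℕ :=
  ((Finset.Icc 3 N ×ˢ Finset.Icc 3 N).filter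
    fun p => p.1.Prime ∧ p.2.Prime ∧ p.1 + p.2 = N).card
/-- The singular product `∏_{p prime, p ∤ N} (1 - 1/(p-1)²)`. -/
noncomputable def singularProd (N : ℕ) : ℝ :=
  ∏' p : Nat.Primes, if (p : ℕ) ∣ N then 1 else 1 - 1 / ((p : ℝ) - 1) ^ 2
/-- The constant `d = ∏_{p odd prime} (1 - 1/(p-1)²)`. -/
noncomputable def dConst : ℝ :=
  ∏' p : Nat.Primes, if (p : ℕ) = 2 then 1 else 1 - 1 / ((p : ℝ) - 1) ^ 2

theorem hasProd_le_hasProd_of_nonneg {ι : Type*} {f g : ι → ℝ} {a b : ℝ}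
    (hf0 : ∀ i, 0 ≤ f i) (hfg : ∀ i, f i ≤ g i) (hf : HasProd f a) (hg : HasProd g b) :
    a ≤ b :=
  le_of_tendsto_of_tendsto' hf hg fun _ =>
    Finset.prod_le_prod (fun i _ => hf0 i) fun i _ => hfg i

theorem summable_one_div_prime_sub_one_sq :
    Summable fun p : Nat.Primes => 1 / ((p : ℝ) - 1) ^ 2 := by
  have h : Summable fun n : ℕ => 1 / ((n : ℝ) - 1) ^ 2 :=
    (summable_nat_add_iff 1).1 <| by simp
  exact h.subtype _

theorem one_div_prime_sub_one_sq_le_one {p : ℕ} (hp : p.Prime) (hp2 : p ≠ 2) :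
    1 / ((p : ℝ) - 1) ^ 2 ≤ 1 := by
  have : (3 : ℝ) ≤ p := by exact_mod_cast (hp.two_le.lt_of_ne' hp2 : 2 < p)
  rw [div_le_one (by nlinarith)]
  nlinarith

section SieveFactor

variable (P : ℕ → Prop) [DecidablePred P]

/-- `singularProd N` and `dConst` are, definitionally, `∏' p, sieveFactor (· ∣ N) p` and
`∏' p, sieveFactor (· = 2) p`. -/
noncomputable def sieveFactor (p : Nat.Primes) : ℝ :=
  if P p then 1 else 1 - 1 / ((p : ℝ) - 1) ^ 2

theorem multipliable_sieveFactor : Multipliable (sieveFactor P) := by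
  have hu : Summable fun p : Nat.Primes => if P p then (0 : ℝ) else -(1 / ((p : ℝ) - 1) ^ 2) :=
    summable_one_div_prime_sub_one_sq.of_norm_bounded fun p => by
      split_ifs
      · simp only [norm_zero]; positivity
      · rw [norm_neg, Real.norm_of_nonneg (by positivity)]
  refine (Real.multipliable_one_add_of_summable hu).congr fun p => ?_
  unfold sieveFactor
  split_ifs <;> ring

variable {P}

theorem sieveFactor_nonneg (hP : P 2) (p : Nat.Primes) : 0 ≤ sieveFactor P p := by
  unfold sieveFactor
  split_ifs with hp
  · exact zero_le_one
  · exact sub_nonneg.2 <| one_div_prime_sub_one_sq_le_one p.2 fun h => hp (h ▸ hP)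

theorem sieveFactor_le_sieveFactor {Q : ℕ → Prop} [DecidablePred Q] (hPQ : ∀ n, P n → Q n)
    (p : Nat.Primes) : sieveFactor P p ≤ sieveFactor Q p := by
  unfold sieveFactor
  split_ifs with hP hQ hQ
  · exact le_rfl
  · exact absurd (hPQ _ hP) hQ
  · exact sub_le_self _ (by positivity)
  · exact le_rfl

theorem tprod_sieveFactor_le {Q : ℕ → Prop} [DecidablePred Q] (hP : P 2) (hPQ : ∀ n, P n → Q n) :
    ∏' p, sieveFactor P p ≤ ∏' p, sieveFactor Q p :=
  hasProd_le_hasProd_of_nonneg (sieveFactor_nonneg hP) (sieveFactor_le_sieveFactor hPQ)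
    (multipliable_sieveFactor P).hasProd (multipliable_sieveFactor Q).hasProd

end SieveFactor

theorem dConst_nonneg : 0 ≤ dConst :=
  tprod_nonneg (sieveFactor_nonneg (P := (· = 2)) rfl)

theorem dConst_le_singularProd {N : ℕ} (hN : Even N) : dConst ≤ singularProd N :=
  tprod_sieveFactor_le (P := (· = 2)) (Q := (· ∣ N)) rfl fun _ h => h ▸ hN.two_dvd

namespace Nat

theorem count_coprime_mul (a b : ℕ) : count b.Coprime (a * b) = a * φ b := by
  induction a with
  | zero => simp
  | succ a ih =>
    have hper : ∀ k, b.Coprime (a * b + k) = b.Coprime k := fun k => by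
      rw [add_comm]; exact_mod_cast (periodic_coprime b).nat_mul a k
    simp only [add_mul, one_mul, count_add, ih, hper]
    rw [totient, count_eq_card_filter_range]

/-- Coprimality to `a * b` implies coprimality to `b`, which is `b`-periodic. -/
theorem totient_mul_le_mul_totient (a b : ℕ) : φ (a * b) ≤ a * φ b := by
  rw [totient, ← count_eq_card_filter_range, ← count_coprime_mul]
  exact count_mono_left fun k _ hk => hk.coprime_dvd_left (dvd_mul_left b a)

end Nat

theorem div_totient_le_half_div_totient_two_mul_mul {q : ℕ} (hq : Odd q) {n : ℕ} (hn : 0 < n) :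
    (q : ℝ) / q.totient ≤ 1 / 2 * ((2 * n * q : ℕ) / (2 * n * q).totient) := by
  have hφ : (2 * n * q).totient ≤ n * q.totient := by
    calc (2 * n * q).totient = (n * (2 * q)).totient := by ring_nf
      _ ≤ n * (2 * q).totient := Nat.totient_mul_le_mul_totient n (2 * q)
      _ = n * q.totient := by rw [Nat.totient_two_mul_of_odd hq]
  have hφ0 : (0 : ℝ) < (2 * n * q).totient := by
    exact_mod_cast Nat.totient_pos.2 (Nat.mul_pos (by positivity) hq.pos)
  have hφq : (0 : ℝ) < q.totient := by exact_mod_cast Nat.totient_pos.2 hq.pos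
  rw [div_le_iff₀ hφq]
  push_cast
  rw [show 1 / 2 * (2 * n * q / ((2 * n * q).totient : ℝ)) * q.totient
    = n * q.totient / (2 * n * q).totient * q by field_simp]
  refine le_mul_of_one_le_left (by positivity) ?_
  rw [one_le_div hφ0]
  exact_mod_cast hφ

/-- Assuming the Hardy–Littlewood lower bound, for every positive integer `n` and every
sufficiently large odd integer `q`, the number of ordered pairs of primes `(p₁, p₂)` with
`3 ≤ p₁, p₂ ≤ 2nq` and `p₁ + p₂ = 2nq` is at least `(q/φ(q)) · 2nq·d / (log 2nq)²`. -/
theorem goldbach_count_lower_bound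
    (N₀ : ℕ)
    (hHL : ∀ N : ℕ, N₀ ≤ N → Even N →
      (goldbachCount N : ℝ) ≥
        1 / 2 * ((N : ℝ) / (Nat.totient N : ℝ)) * singularProd N *
          ((N : ℝ) / (Real.log N) ^ 2)) :
    ∃ Q : ℕ, ∀ q : ℕ, Odd q → Q ≤ q → ∀ n : ℕ, 0 < n →
      (goldbachCount (2 * n * q) : ℝ) ≥
        ((q : ℝ) / (Nat.totient q : ℝ)) *
          (2 * (n : ℝ) * (q : ℝ) * dConst) / (Real.log (2 * (n : ℝ) * (q : ℝ))) ^ 2 := by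
  refine ⟨N₀, fun q hq hQ n hn => ?_⟩
  set N := 2 * n * q
  have hN₀ : N₀ ≤ N := hQ.trans (Nat.le_mul_of_pos_left q (by positivity))
  have hN : Even N := (even_two_mul n).mul_right q
  have hNcast : (N : ℝ) = 2 * n * q := by simp [N]
  have hlocal : (q : ℝ) / q.totient * dConst ≤ 1 / 2 * ((N : ℝ) / N.totient) * singularProd N :=
    mul_le_mul (div_totient_le_half_div_totient_two_mul_mul hq hn) (dConst_le_singularProd hN)
      dConst_nonneg (by positivity)
  calc ((q : ℝ) / q.totient) * (2 * n * q * dConst) / Real.log (2 * n * q) ^ 2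
      = (q : ℝ) / q.totient * dConst * ((N : ℝ) / Real.log N ^ 2) := by rw [hNcast]; ring
    _ ≤ 1 / 2 * ((N : ℝ) / N.totient) * singularProd N * ((N : ℝ) / Real.log N ^ 2) :=
      mul_le_mul_of_nonneg_right hlocal (by positivity)
    _ ≤ goldbachCount N := hHL N hN₀ hN
end

section
/- There is a constant C such that for all β ∈ [1/2, 1] and all x ≥ 3, | ∫₂ˣ u^{β-1}/log u du - x^β/(β·log x) | ≤ C·x^β/(log x)². -/
/-!
Since `u ^ β / (β * log u)` has derivative `u ^ (β - 1) / log u - u ^ (β - 1) / (β * log u ^ 2)`,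
the difference in question is `β⁻¹ ∫₂ˣ u ^ (β - 1) / log u ^ 2` minus the boundary term at `2`.
Split this integral at `t = max 2 √x`: on `[2, t]` we have `log u ≥ log 2`, so that piece is
`O(x ^ (β / 2))`; on `[t, x]` we have `log u ≥ log x / 2`, so that piece is `O(x ^ β / log x ^ 2)`.
Finally `x ^ (β / 2) = O(x ^ β / log x ^ 2)` uniformly in `β ≥ 1 / 2`, since
`log x ^ 2 = O(x ^ (1 / 4))`.
-/

open Real Set intervalIntegral MeasureTheory

theorem intervalIntegrable_rpow_div_log_pow {β a b : ℝ} (ha : 1 < a) (hb : 1 < b) (n : ℕ) :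
    IntervalIntegrable (fun u : ℝ => u ^ (β - 1) / log u ^ n) volume a b := by
  refine ContinuousOn.intervalIntegrable fun u hu => ?_
  have hu1 : 1 < u := (lt_min ha hb).trans_le hu.1
  exact ((continuousAt_rpow_const _ _ (Or.inl (by positivity))).div
    ((continuousAt_log (by positivity)).pow n) (pow_ne_zero _ (log_pos hu1).ne')).continuousWithinAt

theorem hasDerivAt_rpow_div_mul_log {β u : ℝ} (hβ : β ≠ 0) (hu : 0 < u) (hlog : log u ≠ 0) :
    HasDerivAt (fun v => v ^ β / (β * log v))
      (u ^ (β - 1) / log u - u ^ (β - 1) / log u ^ 2 / β) u := by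
  have hnum : HasDerivAt (fun v => v ^ β) (β * u ^ (β - 1)) u := by
    simpa [mul_comm] using hasDerivAt_rpow_const (p := β) (Or.inl hu.ne')
  have hquot := hnum.fun_div ((hasDerivAt_log hu.ne').const_mul β) (mul_ne_zero hβ hlog)
  refine hquot.congr_deriv ?_
  rw [rpow_sub_one hu.ne']
  field_simp

theorem integral_rpow_div_log_sub_eq {β a b : ℝ} (hβ : β ≠ 0) (ha : 1 < a) (hb : 1 < b) :
    (∫ u in a..b, u ^ (β - 1) / log u) - b ^ β / (β * log b) =
      (∫ u in a..b, u ^ (β - 1) / log u ^ 2) / β - a ^ β / (β * log a) := by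
  have hint (n : ℕ) := intervalIntegrable_rpow_div_log_pow (β := β) ha hb n
  have hFTC := integral_eq_sub_of_hasDerivAt (fun u hu => by
      have hu1 : 1 < u := (lt_min ha hb).trans_le hu.1
      exact hasDerivAt_rpow_div_mul_log hβ (by linarith) (log_pos hu1).ne')
    (by simpa using (hint 1).sub ((hint 2).div_const β))
  rw [integral_sub (by simpa using hint 1) ((hint 2).div_const β),
    intervalIntegral.integral_div] at hFTC
  linarith

theorem integral_rpow_div_log_sq_le {β a b : ℝ} (hβ : 0 < β) (ha : 1 < a) (hab : a ≤ b) :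
    ∫ u in a..b, u ^ (β - 1) / log u ^ 2 ≤ b ^ β / (β * log a ^ 2) := by
  have hloga : 0 < log a := log_pos ha
  have hmono : ∫ u in a..b, u ^ (β - 1) / log u ^ 2 ≤ ∫ u in a..b, u ^ (β - 1) / log a ^ 2 := by
    refine integral_mono_on hab (intervalIntegrable_rpow_div_log_pow ha (ha.trans_le hab) 2)
      ((intervalIntegral.intervalIntegrable_rpow' (by linarith)).div_const _) fun u hu => ?_
    have hu0 : 0 < u := by linarith [hu.1]
    gcongr
    exact hu.1
  rw [intervalIntegral.integral_div, integral_rpow (Or.inl (by linarith)), sub_add_cancel] at hmono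
  refine hmono.trans ?_
  rw [div_div, mul_comm β (log a ^ 2), ← div_div, ← div_div]
  gcongr
  exact sub_le_self _ (by positivity)

theorem log_sq_le_rpow_div {x ε : ℝ} (hx : 1 ≤ x) (hε : 0 < ε) :
    log x ^ 2 ≤ x ^ (2 * ε) / ε ^ 2 := by
  calc log x ^ 2 ≤ (x ^ ε / ε) ^ 2 := by
        gcongr
        · exact log_nonneg hx
        · exact log_le_rpow_div (by linarith) hε
    _ = x ^ (2 * ε) / ε ^ 2 := by
        rw [div_pow, ← rpow_natCast, ← rpow_mul (by linarith), mul_comm]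
        norm_num

theorem rpow_half_le_rpow_div_log_sq {β x : ℝ} (hβ : 1 / 2 ≤ β) (hx : 1 < x) :
    x ^ (β / 2) ≤ 64 * x ^ β / log x ^ 2 := by
  have hlog : log x ^ 2 ≤ 64 * x ^ (β / 2) := by
    calc log x ^ 2 ≤ x ^ (2 * (1 / 8 : ℝ)) / (1 / 8) ^ 2 := log_sq_le_rpow_div hx.le (by norm_num)
      _ ≤ x ^ (β / 2) / (1 / 8) ^ 2 := by
          gcongr
          · exact hx.le
          · linarith
      _ = 64 * x ^ (β / 2) := by ring
  have hsplit : x ^ β = x ^ (β / 2) * x ^ (β / 2) := by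
    rw [← rpow_add (by linarith)]; ring_nf
  rw [le_div_iff₀ (by have := log_pos hx; positivity), hsplit]
  have : 0 ≤ x ^ (β / 2) := by positivity
  nlinarith

theorem two_rpow_div_mul_log_two_le {β : ℝ} (hβ : 1 / 2 ≤ β) (hβ1 : β ≤ 1) :
    2 ^ β / (β * log 2) ≤ 6 := by
  have hlog2 := log_two_gt_d9
  rw [div_le_iff₀ (by positivity)]
  nlinarith [rpow_le_self_of_one_le (x := 2) (by norm_num) hβ1]

theorem integral_rpow_div_log_sq_le_rpow_div_log_sq {β x : ℝ} (hβ : 1 / 2 ≤ β) (hβ1 : β ≤ 1)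
    (hx : 2 ≤ x) :
    ∫ u in (2 : ℝ)..x, u ^ (β - 1) / log u ^ 2 ≤ 600 * x ^ β / log x ^ 2 := by
  have hβ0 : 0 < β := by linarith
  have hsqrt : 1 ≤ √x := one_le_sqrt.2 (by linarith)
  set t := max 2 √x
  have h2t : 2 ≤ t := le_max_left _ _
  have htx : t ≤ x := max_le hx (sqrt_le_self_iff.2 (Or.inr (by linarith)))
  have hlogt : log x / 2 ≤ log t := by
    rw [← log_sqrt (by linarith)]
    exact log_le_log (by linarith) (le_max_right _ _)
  have htβ : t ^ β ≤ 2 * x ^ (β / 2) := by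
    calc t ^ β ≤ (2 * √x) ^ β := by
          gcongr
          exact max_le (by linarith) (by linarith)
      _ = 2 ^ β * x ^ (β / 2) := by
          rw [mul_rpow (by norm_num) (sqrt_nonneg _), sqrt_eq_rpow, ← rpow_mul (by linarith)]
          ring_nf
      _ ≤ 2 * x ^ (β / 2) := by
          gcongr
          exact rpow_le_self_of_one_le (by norm_num) hβ1
  have hlog2 := log_two_gt_d9
  have hlogx : 0 < log x := log_pos (by linarith)
  have hlow : ∫ u in (2 : ℝ)..t, u ^ (β - 1) / log u ^ 2 ≤ 576 * x ^ β / log x ^ 2 := by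
    calc _ ≤ t ^ β / (β * log 2 ^ 2) := integral_rpow_div_log_sq_le hβ0 one_lt_two h2t
      _ ≤ 9 * x ^ (β / 2) := by
          have hlog2sq : 0.48 < log 2 ^ 2 := by nlinarith
          have hden : 0.24 ≤ β * log 2 ^ 2 := by nlinarith
          rw [div_le_iff₀ (by positivity)]
          nlinarith [rpow_nonneg (x := x) (by linarith) (β / 2)]
      _ ≤ 9 * (64 * x ^ β / log x ^ 2) := by
          gcongr
          exact rpow_half_le_rpow_div_log_sq hβ (by linarith)
      _ = 576 * x ^ β / log x ^ 2 := by ring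
  have hhigh : ∫ u in t..x, u ^ (β - 1) / log u ^ 2 ≤ 8 * x ^ β / log x ^ 2 := by
    calc _ ≤ x ^ β / (β * log t ^ 2) := integral_rpow_div_log_sq_le hβ0 (by linarith) htx
      _ ≤ x ^ β / (1 / 2 * (log x / 2) ^ 2) := by
          gcongr
      _ = 8 * x ^ β / log x ^ 2 := by ring
  rw [← integral_add_adjacent_intervals (b := t) (intervalIntegrable_rpow_div_log_pow one_lt_two
    (by linarith) 2) (intervalIntegrable_rpow_div_log_pow (by linarith) (by linarith) 2)]
  have : 0 ≤ x ^ β / log x ^ 2 := div_nonneg (rpow_nonneg (by linarith) _) (sq_nonneg _)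
  rw [mul_div_assoc] at hlow hhigh ⊢
  linarith

/-- There is a constant `C` such that for all `β ∈ [1/2, 1]` and all `x ≥ 3`,
`| ∫₂ˣ u^{β-1}/log u du - x^β/(β·log x) | ≤ C·x^β/(log x)²`. -/
theorem integral_rpow_div_log_asymptotic :
    ∃ C : ℝ, ∀ β : ℝ, 1 / 2 ≤ β → β ≤ 1 → ∀ x : ℝ, 3 ≤ x →
      |(∫ u in (2:ℝ)..x, u ^ (β - 1) / Real.log u) - x ^ β / (β * Real.log x)| ≤
        C * x ^ β / (Real.log x) ^ 2 := by
  refine ⟨1600, fun β hβ hβ1 x hx => ?_⟩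
  have hβ0 : 0 < β := by linarith
  rw [integral_rpow_div_log_sub_eq hβ0.ne' one_lt_two (by linarith)]
  set I := ∫ u in (2 : ℝ)..x, u ^ (β - 1) / log u ^ 2
  have hI0 : 0 ≤ I := integral_nonneg (by linarith) fun u hu => by
    have : 0 < u := by linarith [hu.1]
    positivity
  have hIβ : I / β ≤ 2 * I := by
    rw [div_le_iff₀ hβ0]
    nlinarith
  have hIβ0 : 0 ≤ I / β := div_nonneg hI0 hβ0.le
  have hI : I ≤ 600 * x ^ β / log x ^ 2 :=
    integral_rpow_div_log_sq_le_rpow_div_log_sq hβ hβ1 (by linarith)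
  have hone : 1 ≤ 64 * x ^ β / log x ^ 2 :=
    (one_le_rpow (by linarith) (by positivity)).trans
      (rpow_half_le_rpow_div_log_sq hβ (by linarith))
  have hboundary := two_rpow_div_mul_log_two_le hβ hβ1
  have hboundary0 : 0 ≤ 2 ^ β / (β * log 2) := by positivity
  rw [mul_div_assoc] at hI hone ⊢
  exact abs_sub_le_iff.2 ⟨by linarith, by linarith⟩
end
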